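/- arXiv:1907.13499 — 3 statements merged into one kernel-verified Lean document; each statement's English description precedes it below -/
import Mathlib

section
/- Let $(S_k)_{k\in\mathbb{Z}}$ be a family of bounded linear operators on a Hilbert space $H$, let $h \in H$, and let $(u_n)_{n\in\mathbb{Z}}$, $(v_n)_{n\in\mathbb{Z}}$ be sequences in $H$ such that $h = \sum_{n} u_n$ (convergent in norm) and $\sum_n \|v_n\|^2 < \infty$. Suppose there is a sequence $(\sigma(j))_{j\in\mathbb{Z}}$ of nonnegative reals with $w = \sum_j \sigma(j) < \infty$ such that $\|S_k u_n\| \le \sigma(n-k)\|v_n\|$ for all $n,k$. Then $\sum_k \|S_k h\|^2 \le w^2 \sum_n \|v_n\|^2$. -/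
/-- Almost orthogonality principle: if `h = ∑ₙ uₙ`, `∑ₙ ‖vₙ‖² < ∞`, and
`‖Sₖ uₙ‖ ≤ σ(n-k) ‖vₙ‖` with `w = ∑ⱼ σ(j) < ∞`, then `∑ₖ ‖Sₖ h‖² ≤ w² ∑ₙ ‖vₙ‖²`. -/
theorem almost_orthogonality {H : Type*} [NormedAddCommGroup H] [InnerProductSpace ℝ H]
    [CompleteSpace H] (S : ℤ → H →L[ℝ] H) (h : H) (u v : ℤ → H) (σ : ℤ → ℝ) (w : ℝ)
    (hu : HasSum u h) (hv : Summable fun n => ‖v n‖ ^ 2)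
    (hσ : ∀ j, 0 ≤ σ j) (hw : HasSum σ w)
    (hb : ∀ n k : ℤ, ‖S k (u n)‖ ≤ σ (n - k) * ‖v n‖) :
    ∑' k : ℤ, ‖S k h‖ ^ 2 ≤ w ^ 2 * ∑' n : ℤ, ‖v n‖ ^ 2 := by
  set T := ∑' n : ℤ, ‖v n‖ ^ 2 with hTdef
  have hT0 : 0 ≤ T := tsum_nonneg fun n => sq_nonneg _
  have hw0 : 0 ≤ w := by
    rw [← hw.tsum_eq]; exact tsum_nonneg hσ
  have hσle : ∀ j, σ j ≤ w := fun j => le_hasSum hw j fun i _ => hσ i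
  have ha_sq : ∀ n, ‖v n‖ ^ 2 ≤ T := fun n => Summable.le_tsum hv n fun i _ => sq_nonneg _
  have haM : ∀ n, ‖v n‖ ≤ Real.sqrt T := fun n => by
    have h1 := ha_sq n
    nlinarith [Real.sq_sqrt hT0, Real.sqrt_nonneg T, norm_nonneg (v n)]
  have hσk : ∀ k : ℤ, HasSum (fun n => σ (n - k)) w := fun k =>
    (Equiv.subRight k).hasSum_iff.mpr hw
  have hσn : ∀ n : ℤ, HasSum (fun k => σ (n - k)) w := fun n =>
    (Equiv.subLeft n).hasSum_iff.mpr hw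
  have hS1 : ∀ k : ℤ, Summable fun n => σ (n - k) * ‖v n‖ := fun k =>
    Summable.of_nonneg_of_le (fun n => mul_nonneg (hσ _) (norm_nonneg _))
      (fun n => mul_le_mul_of_nonneg_left (haM n) (hσ _))
      ((hσk k).summable.mul_right _)
  have hS2 : ∀ k : ℤ, Summable fun n => σ (n - k) * ‖v n‖ ^ 2 := fun k =>
    Summable.of_nonneg_of_le (fun n => mul_nonneg (hσ _) (sq_nonneg _))
      (fun n => mul_le_mul_of_nonneg_right (hσle _) (sq_nonneg _))
      (hv.mul_left w)
  -- pointwise key bound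
  have hkey : ∀ k : ℤ, ‖S k h‖ ^ 2 ≤ w * ∑' n, σ (n - k) * ‖v n‖ ^ 2 := by
    intro k
    have hsum : HasSum (fun n => S k (u n)) (S k h) := (S k).hasSum hu
    have hnn : Summable fun n => ‖S k (u n)‖ :=
      Summable.of_nonneg_of_le (fun n => norm_nonneg _) (fun n => hb n k) (hS1 k)
    have hnorm : ‖S k h‖ ≤ ∑' n, σ (n - k) * ‖v n‖ := by
      calc ‖S k h‖ = ‖∑' n, S k (u n)‖ := by rw [hsum.tsum_eq]
        _ ≤ ∑' n, ‖S k (u n)‖ := norm_tsum_le_tsum_norm hnn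
        _ ≤ ∑' n, σ (n - k) * ‖v n‖ := Summable.tsum_le_tsum (fun n => hb n k) hnn (hS1 k)
    have hCS : (∑' n, σ (n - k) * ‖v n‖) ^ 2 ≤ w * ∑' n, σ (n - k) * ‖v n‖ ^ 2 := by
      refine le_of_tendsto (((hS1 k).hasSum.comp Filter.tendsto_id).pow 2) ?_
      filter_upwards with s
      have hfin : (∑ n ∈ s, σ (n - k) * ‖v n‖) ^ 2 ≤
          (∑ n ∈ s, σ (n - k)) * ∑ n ∈ s, σ (n - k) * ‖v n‖ ^ 2 := by
        have := Finset.sum_mul_sq_le_sq_mul_sq s (fun n => Real.sqrt (σ (n - k)))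
          (fun n => Real.sqrt (σ (n - k)) * ‖v n‖)
        have e1 : ∀ n : ℤ, Real.sqrt (σ (n - k)) * (Real.sqrt (σ (n - k)) * ‖v n‖)
            = σ (n - k) * ‖v n‖ := fun n => by
          rw [← mul_assoc, Real.mul_self_sqrt (hσ _)]
        have e2 : ∀ n : ℤ, Real.sqrt (σ (n - k)) ^ 2 = σ (n - k) := fun n =>
          Real.sq_sqrt (hσ _)
        have e3 : ∀ n : ℤ, (Real.sqrt (σ (n - k)) * ‖v n‖) ^ 2 = σ (n - k) * ‖v n‖ ^ 2 :=
          fun n => by rw [mul_pow, e2]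
        simpa only [e1, e2, e3] using this
      refine hfin.trans (mul_le_mul ?_ ?_ ?_ hw0)
      · exact sum_le_hasSum s (fun i _ => hσ _) (hσk k)
      · exact Summable.sum_le_tsum s (fun i _ => mul_nonneg (hσ _) (sq_nonneg _)) (hS2 k)
      · exact Finset.sum_nonneg fun i _ => mul_nonneg (hσ _) (sq_nonneg _)
    calc ‖S k h‖ ^ 2 ≤ (∑' n, σ (n - k) * ‖v n‖) ^ 2 :=
          pow_le_pow_left₀ (norm_nonneg _) hnorm 2
      _ ≤ w * ∑' n, σ (n - k) * ‖v n‖ ^ 2 := hCS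
  -- sum over k via finite partial sums
  refine tsum_le_of_sum_le' (by positivity) ?_
  intro K
  have step1 : ∑ k ∈ K, ‖S k h‖ ^ 2 ≤ ∑ k ∈ K, w * ∑' n, σ (n - k) * ‖v n‖ ^ 2 :=
    Finset.sum_le_sum fun k _ => hkey k
  have step2 : ∑ k ∈ K, w * ∑' n, σ (n - k) * ‖v n‖ ^ 2
      = w * ∑' n : ℤ, (∑ k ∈ K, σ (n - k)) * ‖v n‖ ^ 2 := by
    rw [← Finset.mul_sum, ← Summable.tsum_finsetSum (f := fun k n => σ (n - k) * ‖v n‖ ^ 2)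
      (fun k _ => hS2 k)]
    simp_rw [Finset.sum_mul]
  have step3 : ∑' n : ℤ, (∑ k ∈ K, σ (n - k)) * ‖v n‖ ^ 2 ≤ ∑' n : ℤ, w * ‖v n‖ ^ 2 := by
    refine Summable.tsum_le_tsum (fun n => ?_) ?_ (hv.mul_left w)
    · exact mul_le_mul_of_nonneg_right
        (sum_le_hasSum K (fun i _ => hσ _) (hσn n)) (sq_nonneg _)
    · exact Summable.of_nonneg_of_le
        (fun n => mul_nonneg (Finset.sum_nonneg fun i _ => hσ _) (sq_nonneg _))
        (fun n => mul_le_mul_of_nonneg_right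
          (sum_le_hasSum K (fun i _ => hσ _) (hσn n)) (sq_nonneg _))
        (hv.mul_left w)
  calc ∑ k ∈ K, ‖S k h‖ ^ 2 ≤ w * ∑' n : ℤ, (∑ k ∈ K, σ (n - k)) * ‖v n‖ ^ 2 := by
        rw [← step2]; exact step1
    _ ≤ w * ∑' n : ℤ, w * ‖v n‖ ^ 2 := mul_le_mul_of_nonneg_left step3 hw0
    _ = w ^ 2 * T := by rw [tsum_mul_left]; ring
end

section
/- Let $k < n$ be integers, let $B_k = B(0, 2^{-k}) \subset \mathbb{R}^d$, and for $x \in \mathbb{R}^d$ let $\mathcal{I}(B_k + x, n)$ denote the union over all standard dyadic cubes $Q$ of side length $2^{-n}$ intersecting the boundary $\partial(B_k+x)$ of the sets $Q \cap (B_k + x)$. Then the Lebesgue measure satisfies $|\mathcal{I}(B_k+x, n)| \le C_d \, 2^{-n} \, 2^{-k(d-1)}$ for a constant $C_d$ depending only on $d$. -/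
open MeasureTheory Metric

noncomputable section

/-- Euclidean space `ℝ^d`. -/
abbrev Euc (d : ℕ) := EuclideanSpace ℝ (Fin d)

/-- The standard dyadic cube at scale `n` (side length `2^{-n}`) indexed by `m`. -/
def dyadicCube (d : ℕ) (n : ℤ) (m : Fin d → ℤ) : Set (Euc d) :=
  {y | ∀ j, (m j : ℝ) * 2 ^ (-n) ≤ y j ∧ y j < ((m j : ℝ) + 1) * 2 ^ (-n)}

/-- Index of the dyadic cube at scale `n` containing `x`. -/
def dyadicIdx (d : ℕ) (n : ℤ) (x : Euc d) : Fin d → ℤ :=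
  fun j => ⌊(2 : ℝ) ^ n * x j⌋

/-- Dyadic conditional expectation at scale `2^{-n}`. -/
def Ek (d : ℕ) (n : ℤ) (h : Euc d → ℝ) (x : Euc d) : ℝ :=
  (2 : ℝ) ^ (n * d) * ∫ y in dyadicCube d n (dyadicIdx d n x), h y

/-- Average over the Euclidean ball of radius `2^{-k}` centered at `x`. -/
def Mk (d : ℕ) (k : ℤ) (h : Euc d → ℝ) (x : Euc d) : ℝ :=
  ((volume (ball (0 : Euc d) ((2 : ℝ) ^ (-k)))).toReal)⁻¹ *
    ∫ y in ball x ((2 : ℝ) ^ (-k)), h y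

/-- Indices of dyadic cubes at scale `n` meeting the boundary of the ball `B(x, 2^{-k})`. -/
def bdryIdx (d : ℕ) (k n : ℤ) (x : Euc d) : Set (Fin d → ℤ) :=
  {m | (dyadicCube d n m ∩ frontier (ball x ((2 : ℝ) ^ (-k)))).Nonempty}

/-- `𝓘(B_k + x, n)`: union over boundary cubes `Q` at scale `n` of `Q ∩ B(x,2^{-k})`. -/
def Ikn (d : ℕ) (k n : ℤ) (x : Euc d) : Set (Euc d) :=
  ⋃ m ∈ bdryIdx d k n x, dyadicCube d n m ∩ ball x ((2 : ℝ) ^ (-k))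

/-- The operator `M_{k,n}`. -/
def Mkn (d : ℕ) (k n : ℤ) (h : Euc d → ℝ) (x : Euc d) : ℝ :=
  ((volume (ball (0 : Euc d) ((2 : ℝ) ^ (-k)))).toReal)⁻¹ * ∫ y in Ikn d k n x, h y

/-- The concentric dilation `iQ` of the dyadic cube at scale `n` indexed by `m`. -/
def cubeDil (d : ℕ) (i : ℕ) (n : ℤ) (m : Fin d → ℤ) : Set (Euc d) :=
  {y | ∀ j, ((m j : ℝ) + 1 / 2) * 2 ^ (-n) - (i : ℝ) * 2 ^ (-n) / 2 ≤ y j ∧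
      y j < ((m j : ℝ) + 1 / 2) * 2 ^ (-n) + (i : ℝ) * 2 ^ (-n) / 2}

lemma pow_sub_pow_le_aux (e : ℕ) {s r : ℝ} (hs : 0 ≤ s) (hsr : s ≤ r) :
    r ^ (e + 1) - s ^ (e + 1) ≤ (e + 1 : ℝ) * r ^ e * (r - s) := by
  induction e with
  | zero => simp
  | succ e ih =>
    have hp : s ^ (e+1) ≤ r ^ (e+1) := pow_le_pow_left₀ hs hsr _
    have hr : 0 ≤ r := hs.trans hsr
    have hre : 0 ≤ r ^ e := pow_nonneg hr e
    calc r ^ (e + 2) - s ^ (e + 2) = r * (r ^ (e+1) - s ^ (e+1)) + (r - s) * s ^ (e+1) := by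
          ring
      _ ≤ r * ((e + 1 : ℝ) * r ^ e * (r - s)) + (r - s) * r ^ (e+1) := by
          have h1 := mul_le_mul_of_nonneg_left ih hr
          have h2 : (r - s) * s ^ (e+1) ≤ (r - s) * r ^ (e+1) :=
            mul_le_mul_of_nonneg_left hp (by linarith)
          linarith
      _ = ((e+1 : ℕ) + 1 : ℝ) * r ^ (e+1) * (r - s) := by push_cast; ring

/-- points of the same dyadic cube are within `√d * 2^{-n}`. -/
lemma dist_le_of_mem_dyadicCube {d : ℕ} {n : ℤ} {m : Fin d → ℤ} {y z : Euc d}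
    (hy : y ∈ dyadicCube d n m) (hz : z ∈ dyadicCube d n m) :
    dist y z ≤ Real.sqrt d * 2 ^ (-n) := by
  have hc : (0:ℝ) ≤ 2 ^ (-n) := by positivity
  rw [EuclideanSpace.dist_eq]
  have hsum : (∑ i, dist (y i) (z i) ^ 2) ≤ (d : ℝ) * (2 ^ (-n)) ^ 2 := by
    have : ∀ i : Fin d, dist (y i) (z i) ^ 2 ≤ (2 ^ (-n) : ℝ) ^ 2 := by
      intro i
      have h1 := (hy i).1; have h2 := (hy i).2
      have h3 := (hz i).1; have h4 := (hz i).2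
      have habs : |y i - z i| ≤ (2 : ℝ) ^ (-n) := by
        rw [abs_le]; constructor <;> nlinarith
      calc dist (y i) (z i) ^ 2 = |y i - z i| ^ 2 := by
            rw [Real.dist_eq]
        _ ≤ (2 ^ (-n) :ℝ) ^ 2 := by
            exact pow_le_pow_left₀ (abs_nonneg _) habs 2
    calc (∑ i, dist (y i) (z i) ^ 2) ≤ ∑ _i : Fin d, (2 ^ (-n) : ℝ) ^ 2 :=
          Finset.sum_le_sum (fun i _ => this i)
      _ = (d : ℝ) * (2 ^ (-n)) ^ 2 := by simp [mul_comm]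
  calc Real.sqrt (∑ i, dist (y i) (z i) ^ 2) ≤ Real.sqrt ((d : ℝ) * (2 ^ (-n)) ^ 2) :=
        Real.sqrt_le_sqrt hsum
    _ = Real.sqrt d * 2 ^ (-n) := by
        rw [Real.sqrt_mul (by positivity), Real.sqrt_sq hc]


/-- Measure bound for the union of boundary-cube intersections:
`|𝓘(B_k+x, n)| ≤ C_d 2^{-n} 2^{-k(d-1)}` for `k < n`. -/
theorem boundary_cubes_measure (d : ℕ) (hd : 0 < d) :
    ∃ C : ℝ, 0 < C ∧ ∀ (k n : ℤ), k < n → ∀ x : Euc d,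
      volume (Ikn d k n x) ≤
        ENNReal.ofReal (C * 2 ^ (-n) * 2 ^ (-k * (d - 1 : ℕ))) := by

  haveI : Nonempty (Fin d) := ⟨⟨0, hd⟩⟩
  haveI : Nontrivial (Euc d) := by infer_instance
  set B : ENNReal := volume (ball (0 : Euc d) 1) with hB
  set V : ℝ := B.toReal with hVdef
  have hBpos : 0 < B := measure_ball_pos volume 0 one_pos
  have hBtop : B ≠ ⊤ := measure_ball_lt_top.ne
  have hV : 0 < V := ENNReal.toReal_pos hBpos.ne' hBtop
  have hdpos : (0:ℝ) < d := by exact_mod_cast hd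
  refine ⟨d * Real.sqrt d * V, by positivity, ?_⟩
  intro k n hkn x
  set r : ℝ := 2 ^ (-k) with hrdef
  set δ : ℝ := Real.sqrt d * 2 ^ (-n) with hδdef
  have hr : 0 < r := by positivity
  have hδ : 0 < δ := by positivity
  set s : ℝ := max (r - δ) 0 with hsdef
  have hs0 : 0 ≤ s := le_max_right _ _
  have hsr : s ≤ r := max_le (by linarith) hr.le
  -- subset of annulus
  have hsub : Ikn d k n x ⊆ ball x r \ ball x s := by
    rintro y hy
    simp only [Ikn, Set.mem_iUnion] at hy
    obtain ⟨m, hm, hycube, hyball⟩ := hy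
    obtain ⟨z, hzcube, hzfr⟩ := hm
    rw [frontier_ball x hr.ne'] at hzfr
    have hzx : dist z x = r := hzfr
    have hyz : dist y z ≤ δ := dist_le_of_mem_dyadicCube hycube hzcube
    refine ⟨hyball, ?_⟩
    simp only [mem_ball, not_lt]
    have : r ≤ dist y x + dist y z := by
      calc r = dist z x := hzx.symm
        _ ≤ dist z y + dist y x := dist_triangle _ _ _
        _ = dist y x + dist y z := by rw [dist_comm z y]; ring
    have h1 : r - δ ≤ dist y x := by linarith
    exact max_le h1 dist_nonneg
  have hfr : Module.finrank ℝ (Euc d) = d := finrank_euclideanSpace_fin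
  have hballr : volume (ball x r) = ENNReal.ofReal (r ^ d) * B := by
    rw [Measure.addHaar_ball volume x hr.le, hfr]
  have hballs : volume (ball x s) = ENNReal.ofReal (s ^ d) * B := by
    rw [Measure.addHaar_ball volume x hs0, hfr]
  have key : r ^ d - s ^ d ≤ (d : ℝ) * r ^ (d-1) * δ := by
    obtain ⟨e, he⟩ : ∃ e, d = e + 1 := ⟨d - 1, (Nat.succ_pred_eq_of_pos hd).symm⟩
    subst he
    have := pow_sub_pow_le_aux e hs0 hsr
    have hrs : r - s ≤ δ := by
      rcases le_total (r - δ) 0 with h | h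
      · simp only [hsdef, max_eq_right h]; linarith
      · simp only [hsdef, max_eq_left h]; linarith
    have hre : 0 ≤ (e + 1 : ℝ) * r ^ e := by positivity
    have h2 : (e + 1 : ℝ) * r ^ e * (r - s) ≤ (e + 1 : ℝ) * r ^ e * δ :=
      mul_le_mul_of_nonneg_left hrs hre
    simp only [Nat.add_sub_cancel]
    push_cast
    linarith
  calc volume (Ikn d k n x) ≤ volume (ball x r \ ball x s) := measure_mono hsub
    _ = volume (ball x r) - volume (ball x s) :=
        measure_diff (ball_subset_ball hsr) measurableSet_ball.nullMeasurableSet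
          measure_ball_lt_top.ne
    _ = ENNReal.ofReal (r ^ d) * B - ENNReal.ofReal (s ^ d) * B := by
        rw [hballr, hballs]
    _ = (ENNReal.ofReal (r ^ d) - ENNReal.ofReal (s ^ d)) * B := by
        rw [ENNReal.sub_mul (fun _ _ => hBtop)]
    _ = ENNReal.ofReal (r ^ d - s ^ d) * B := by
        rw [ENNReal.ofReal_sub _ (by positivity)]
    _ ≤ ENNReal.ofReal ((d : ℝ) * r ^ (d-1) * δ) * B := by
        exact mul_le_mul_left (ENNReal.ofReal_le_ofReal key) B
    _ = ENNReal.ofReal ((d : ℝ) * r ^ (d-1) * δ * V) := by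
        rw [← ENNReal.ofReal_toReal hBtop, ← ENNReal.ofReal_mul (by positivity)]
    _ = ENNReal.ofReal ((d : ℝ) * Real.sqrt d * V * 2 ^ (-n) * 2 ^ (-k * (d - 1 : ℕ))) := by
        congr 1
        have hpow : (2 : ℝ) ^ (-k * ((d - 1 : ℕ) : ℤ)) = r ^ (d - 1) := by
          rw [zpow_mul, zpow_natCast]
        rw [hpow, hrdef, hδdef]
        ring
end
end

section
/- Let $f \in L_\infty(\mathbb{R}^d)$, $Q$ a dyadic cube of side length $\ell(Q)$ with center $c_Q$, and $f_2 = f\mathbf{1}_{\mathbb{R}^d\setminus 3Q}$. Define $F_k(x) = (M_k f_2(x) - \mathsf{E}_k f_2(x)) - (M_k f_2(c_Q) - \mathsf{E}_k f_2(c_Q))$. Then for all $x \in Q$, $\sum_{k \in \mathbb{Z}} |F_k(x)|^2 \le C_d \|f\|_\infty^2$, i.e., the square function of the differences is uniformly bounded on $Q$. -/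
open MeasureTheory Metric

noncomputable section

open scoped ENNReal

/-! For scales `2^{-k} < ℓ(Q)` the ball `B(x, 2^{-k})` and the dyadic cube of scale `k` around
any point of `Q` lie in `3Q`, where `f₂` vanishes, so `F_k = 0`. For `2^{-k} ≥ ℓ(Q)` the points
`x` and `c_Q` lie in the same dyadic cube of scale `k`, so the `𝖤_k` terms cancel, while the balls
`B(x, 2^{-k})` and `B(c_Q, 2^{-k})` both contain a concentric ball around `x` of radius
`2^{-k} - |x - c_Q|`; the shells left over have relative volume at most `d |x - c_Q| 2^k`, so
`|M_k f₂(x) - M_k f₂(c_Q)| ≤ 2 d ‖f‖_∞ |x - c_Q| 2^k`. Squaring gives a geometric series in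
`2^k ℓ(Q)`. -/

theorem MeasureTheory.nonneg_of_ae_norm_le {α F : Type*} [MeasurableSpace α] {μ : Measure α}
    [NeZero μ] [NormedAddCommGroup F] {h : α → F} {M : ℝ} (hb : ∀ᵐ y ∂μ, ‖h y‖ ≤ M) : 0 ≤ M :=
  let ⟨_, hy⟩ := hb.exists
  (norm_nonneg _).trans hy

theorem MeasureTheory.MemLp.ae_norm_le_toReal_eLpNorm_top {α F : Type*} [MeasurableSpace α]
    {μ : Measure α} [NormedAddCommGroup F] {f : α → F} (hf : MemLp f ∞ μ) :
    ∀ᵐ y ∂μ, ‖f y‖ ≤ (eLpNorm f ∞ μ).toReal := by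
  filter_upwards [enorm_ae_le_eLpNormEssSup f μ] with y hy
  rw [← eLpNorm_exponent_top, ← ofReal_norm] at hy
  exact (ENNReal.ofReal_le_iff_le_toReal hf.2.ne).1 hy

theorem abs_setIntegral_sub_setIntegral_le_of_subset {α : Type*} [MeasurableSpace α]
    {μ : Measure α} {h : α → ℝ} {M : ℝ} {A B C : Set α} (hCA : C ⊆ A) (hCB : C ⊆ B)
    (hA : μ A ≠ ∞) (hB : μ B ≠ ∞) (hC : MeasurableSet C) (hm : AEStronglyMeasurable h μ)
    (hb : ∀ᵐ y ∂μ, ‖h y‖ ≤ M) :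
    |∫ y in A, h y ∂μ - ∫ y in B, h y ∂μ| ≤
      M * (μ (A \ C)).toReal + M * (μ (B \ C)).toReal := by
  have hsdiff : ∀ u, C ⊆ u → μ u ≠ ∞ →
      ∫ y in u, h y ∂μ = ∫ y in u \ C, h y ∂μ + ∫ y in C, h y ∂μ := fun u hCu hu => by
    rw [setIntegral_sdiff hC (Measure.integrableOn_of_bounded hu hm (ae_restrict_of_ae hb)) hCu,
      sub_add_cancel]
  have hbound : ∀ u, μ u ≠ ∞ → ‖∫ y in u \ C, h y ∂μ‖ ≤ M * (μ (u \ C)).toReal := fun u hu =>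
    norm_setIntegral_le_of_norm_le_const_ae
      ((measure_mono Set.sdiff_subset).trans_lt hu.lt_top) (ae_restrict_of_ae hb)
  rw [hsdiff A hCA hA, hsdiff B hCB hB, add_sub_add_right_eq_sub]
  exact (abs_sub _ _).trans (add_le_add (hbound A hA) (hbound B hB))

section AddHaar

open Module

variable {E : Type*} [NormedAddCommGroup E] [NormedSpace ℝ E] [FiniteDimensional ℝ E]
  [MeasurableSpace E] [BorelSpace E] [Nontrivial E] (μ : Measure E) [μ.IsAddHaarMeasure]

theorem measure_ball_sdiff_ball_toReal_le {x y : E} {r s : ℝ} (hs : 0 ≤ s) (hsr : s ≤ r)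
    (hr : 0 < r) (hsub : ball x s ⊆ ball y r) :
    (μ (ball y r \ ball x s)).toReal ≤ finrank ℝ E * (r - s) / r * (μ (ball 0 r)).toReal := by
  set N := finrank ℝ E
  set c₁ := (μ (ball (0 : E) 1)).toReal
  have hvol : ∀ (z : E) {ρ : ℝ}, 0 ≤ ρ → (μ (ball z ρ)).toReal = ρ ^ N * c₁ := fun z ρ hρ => by
    rw [Measure.addHaar_ball μ z hρ, ENNReal.toReal_mul, ENNReal.toReal_ofReal (by positivity)]
  have hpow : r ^ N - s ^ N ≤ (r - s) * N * r ^ (N - 1) := by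
    simpa [abs_of_nonneg hs, abs_of_pos hr, abs_of_nonneg (sub_nonneg.2 hsr),
      abs_of_nonneg (sub_nonneg.2 (pow_le_pow_left₀ hs hsr N)), max_eq_left hsr] using
      abs_pow_sub_pow_le r s N
  have hN : r ^ (N - 1) = r ^ N / r := by
    rw [eq_div_iff hr.ne', ← pow_succ, Nat.sub_add_cancel finrank_pos]
  rw [measure_sdiff hsub measurableSet_ball.nullMeasurableSet measure_ball_lt_top.ne,
    ENNReal.toReal_sub_of_le (measure_mono hsub) measure_ball_lt_top.ne, hvol y hr.le, hvol x hs,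
    hvol 0 hr.le, ← sub_mul]
  have hc₁ : 0 ≤ c₁ := ENNReal.toReal_nonneg
  calc (r ^ N - s ^ N) * c₁ ≤ (r - s) * N * r ^ (N - 1) * c₁ := by gcongr
    _ = _ := by rw [hN]; ring

theorem abs_setIntegral_ball_sub_setIntegral_ball_le {h : E → ℝ} {M : ℝ}
    (hm : AEStronglyMeasurable h μ) (hb : ∀ᵐ y ∂μ, ‖h y‖ ≤ M) (x c : E) {r : ℝ} (hr : 0 < r) :
    |∫ y in ball x r, h y ∂μ - ∫ y in ball c r, h y ∂μ| ≤
      2 * M * (finrank ℝ E * dist x c / r) * (μ (ball 0 r)).toReal := by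
  set s := max (r - dist x c) 0 with hs_def
  have hs : 0 ≤ s := le_max_right _ _
  have hsr : s ≤ r := max_le (by linarith [dist_nonneg (x := x) (y := c)]) hr.le
  have hrs : r - s ≤ dist x c := by linarith [le_max_left (r - dist x c) 0]
  have hsx : ball x s ⊆ ball x r := ball_subset_ball hsr
  have hsc : ball x s ⊆ ball c r := by
    rcases le_total (dist x c) r with hδ | hδ
    · exact ball_subset_ball' (by rw [hs_def, max_eq_left (sub_nonneg.2 hδ)]; linarith)
    · rw [hs_def, max_eq_right (sub_nonpos.2 hδ), ball_zero]
      exact Set.empty_subset _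
  have hshell : ∀ y, ball x s ⊆ ball y r →
      M * (μ (ball y r \ ball x s)).toReal ≤
        M * (finrank ℝ E * dist x c / r * (μ (ball 0 r)).toReal) := fun y hsy => by
    refine mul_le_mul_of_nonneg_left ?_ (nonneg_of_ae_norm_le hb)
    refine (measure_ball_sdiff_ball_toReal_le μ hs hsr hr hsy).trans ?_
    gcongr
  calc _ ≤ _ := abs_setIntegral_sub_setIntegral_le_of_subset hsx hsc measure_ball_lt_top.ne
        measure_ball_lt_top.ne measurableSet_ball hm hb
    _ ≤ _ := add_le_add (hshell x hsx) (hshell c hsc)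
    _ = _ := by ring

end AddHaar

theorem tsum_int_le_of_le_geometric {G : ℤ → ℝ} {n : ℤ} {A q : ℝ} (hG : ∀ k, 0 ≤ G k)
    (hzero : ∀ k, n < k → G k = 0) (hq₀ : 0 ≤ q) (hq₁ : q < 1)
    (hle : ∀ j : ℕ, G (n - j) ≤ A * q ^ j) : ∑' k, G k ≤ A * (1 - q)⁻¹ := by
  have hinj : Function.Injective fun j : ℕ => n - j := fun a b hab => by simpa using hab
  have hsupp : ∀ k ∉ Set.range fun j : ℕ => n - j, G k = 0 := fun k hk =>
    hzero k (by_contra fun hkn => hk ⟨(n - k).toNat, by simp only; omega⟩)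
  have hgeo : Summable fun j : ℕ => A * q ^ j :=
    (summable_geometric_of_lt_one hq₀ hq₁).mul_left A
  rw [← hinj.tsum_eq (Function.support_subset_iff'.2 hsupp), ← tsum_geometric_of_lt_one hq₀ hq₁,
    ← tsum_mul_left]
  exact (hgeo.of_nonneg_of_le (fun j => hG _) hle).tsum_le_tsum hle hgeo

section Dyadic

variable {d : ℕ}

theorem mem_dyadicCube_iff {n : ℤ} {m : Fin d → ℤ} {x : Euc d} :
    x ∈ dyadicCube d n m ↔ dyadicIdx d n x = m := by
  have h2n : (0 : ℝ) < 2 ^ n := zpow_pos two_pos n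
  simp only [dyadicCube, dyadicIdx, Set.mem_ofPred_eq, funext_iff, Int.floor_eq_iff, zpow_neg,
    mul_inv_le_iff₀ h2n, lt_mul_inv_iff₀ h2n, mul_comm (x _)]

theorem dyadicIdx_apply_eq_div {k n : ℤ} (hkn : k ≤ n) (x : Euc d) (j : Fin d) :
    dyadicIdx d k x j = dyadicIdx d n x j / 2 ^ (n - k).toNat := by
  have hpow : (2 : ℝ) ^ n = 2 ^ k * ((2 ^ (n - k).toNat : ℕ) : ℝ) := by
    rw [Nat.cast_pow, Nat.cast_ofNat, ← zpow_natCast, Int.toNat_of_nonneg (sub_nonneg.2 hkn),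
      ← zpow_add₀ two_ne_zero, add_sub_cancel]
  have hscale : (2 : ℝ) ^ k * x j = 2 ^ n * x j / ((2 ^ (n - k).toNat : ℕ) : ℝ) := by
    rw [hpow]; field_simp
  simp only [dyadicIdx]
  rw [hscale, Int.floor_div_natCast, Nat.cast_pow, Nat.cast_ofNat]

theorem dyadicIdx_eq_of_le {k n : ℤ} (hkn : k ≤ n) {x y : Euc d}
    (h : dyadicIdx d n x = dyadicIdx d n y) : dyadicIdx d k x = dyadicIdx d k y :=
  funext fun j => by rw [dyadicIdx_apply_eq_div hkn, dyadicIdx_apply_eq_div hkn, h]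

theorem dyadicCube_subset_cubeDil {i : ℕ} (hi : 1 ≤ i) (n : ℤ) (m : Fin d → ℤ) :
    dyadicCube d n m ⊆ cubeDil d i n m := by
  intro y hy j
  have hside : (2 : ℝ) ^ (-n) ≤ i * 2 ^ (-n) :=
    le_mul_of_one_le_left (zpow_pos two_pos _).le (by exact_mod_cast hi)
  constructor <;> linarith [hy j]

theorem dyadicCube_dyadicIdx_subset_cubeDil {k n : ℤ} (hnk : n ≤ k) {m : Fin d → ℤ} {x : Euc d}
    (hx : x ∈ dyadicCube d n m) : dyadicCube d k (dyadicIdx d k x) ⊆ cubeDil d 3 n m :=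
  fun _ hy => dyadicCube_subset_cubeDil (by norm_num) n m <| mem_dyadicCube_iff.2 <|
    (dyadicIdx_eq_of_le hnk (mem_dyadicCube_iff.1 hy)).trans (mem_dyadicCube_iff.1 hx)

theorem ball_subset_cubeDil {k n : ℤ} (hnk : n < k) {m : Fin d → ℤ} {x : Euc d}
    (hx : x ∈ dyadicCube d n m) : ball x (2 ^ (-k)) ⊆ cubeDil d 3 n m := by
  intro y hy j
  have hyx : |y j - x j| < 2 ^ (-k) :=
    (PiLp.norm_apply_le (y - x) j).trans_lt (mem_ball_iff_norm.1 hy)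
  have hk : (2 : ℝ) ^ (-k) ≤ 2 ^ (-n) / 2 := by
    rw [div_eq_mul_inv, ← zpow_neg_one, ← zpow_add₀ (two_ne_zero' ℝ)]
    exact zpow_le_zpow_right₀ one_le_two (by omega)
  rw [abs_lt] at hyx
  constructor <;> push_cast <;> linarith [hx j]

theorem center_mem_dyadicCube {n : ℤ} {m : Fin d → ℤ} {c : Euc d}
    (hc : ∀ j, c j = ((m j : ℝ) + 1 / 2) * 2 ^ (-n)) : c ∈ dyadicCube d n m := by
  intro j
  have hside : (0 : ℝ) < 2 ^ (-n) := zpow_pos two_pos _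
  rw [hc j]
  constructor <;> linarith

theorem dist_center_le {n : ℤ} {m : Fin d → ℤ} {x c : Euc d} (hx : x ∈ dyadicCube d n m)
    (hc : ∀ j, c j = ((m j : ℝ) + 1 / 2) * 2 ^ (-n)) : dist x c ≤ √d * 2 ^ (-n) / 2 := by
  have hcoord : ∀ j, dist (x j) (c j) ≤ 2 ^ (-n) / 2 := fun j => by
    rw [Real.dist_eq, abs_le, hc j]
    constructor <;> linarith [hx j]
  calc dist x c = √(∑ j, dist (x j) (c j) ^ 2) := EuclideanSpace.dist_eq x c
    _ ≤ √(∑ _j : Fin d, (2 ^ (-n) / 2 : ℝ) ^ 2) := by gcongr with j; exact hcoord j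
    _ = √d * 2 ^ (-n) / 2 := by
      rw [Finset.sum_const, Finset.card_univ, Fintype.card_fin, nsmul_eq_mul, Real.sqrt_mul',
        Real.sqrt_sq (by positivity), mul_div_assoc]
      positivity

end Dyadic

theorem measurableSet_cubeDil (d i : ℕ) (n : ℤ) (m : Fin d → ℤ) :
    MeasurableSet (cubeDil d i n m) := by
  simp only [cubeDil, Set.ofPred_forall, Set.ofPred_and]
  exact .iInter fun j => (measurableSet_le measurable_const (by fun_prop)).inter
    (measurableSet_lt (by fun_prop) measurable_const)

section Operators

variable {d : ℕ}

theorem Mk_indicator_compl_eq_zero {s : Set (Euc d)} {k : ℤ} {x : Euc d}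
    (hs : ball x (2 ^ (-k)) ⊆ s) (f : Euc d → ℝ) : Mk d k (sᶜ.indicator f) x = 0 := by
  rw [Mk, setIntegral_eq_zero_of_forall_eq_zero fun y hy =>
    Set.indicator_of_notMem (Set.notMem_compl_iff.2 (hs hy)) f, mul_zero]

theorem Ek_indicator_compl_eq_zero {s : Set (Euc d)} {k : ℤ} {x : Euc d}
    (hs : dyadicCube d k (dyadicIdx d k x) ⊆ s) (f : Euc d → ℝ) :
    Ek d k (sᶜ.indicator f) x = 0 := by
  rw [Ek, setIntegral_eq_zero_of_forall_eq_zero fun y hy =>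
    Set.indicator_of_notMem (Set.notMem_compl_iff.2 (hs hy)) f, mul_zero]

theorem Ek_eq_of_dyadicIdx_eq {k : ℤ} {x y : Euc d} (hxy : dyadicIdx d k x = dyadicIdx d k y)
    (h : Euc d → ℝ) : Ek d k h x = Ek d k h y := by
  simp only [Ek, hxy]

theorem abs_Mk_sub_Mk_le (hd : 0 < d) {h : Euc d → ℝ} {M : ℝ}
    (hm : AEStronglyMeasurable h volume) (hb : ∀ᵐ y, ‖h y‖ ≤ M) (k : ℤ) (x c : Euc d) :
    |Mk d k h x - Mk d k h c| ≤ 2 * d * M * dist x c * 2 ^ k := by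
  have : Nonempty (Fin d) := Fin.pos_iff_nonempty.1 hd
  have hr : (0 : ℝ) < 2 ^ (-k) := zpow_pos two_pos _
  have hV : 0 < (volume (ball (0 : Euc d) (2 ^ (-k)))).toReal :=
    ENNReal.toReal_pos (measure_ball_pos volume 0 hr).ne' measure_ball_lt_top.ne
  have hball := abs_setIntegral_ball_sub_setIntegral_ball_le volume hm hb x c hr
  rw [finrank_euclideanSpace_fin] at hball
  rw [Mk, Mk, ← mul_sub, abs_mul, abs_inv, abs_of_pos hV, inv_mul_le_iff₀ hV]
  refine hball.trans_eq ?_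
  rw [zpow_neg, div_inv_eq_mul]
  ring

theorem sq_Mk_sub_Mk_center_le (hd : 0 < d) {h : Euc d → ℝ} {M : ℝ}
    (hm : AEStronglyMeasurable h volume) (hb : ∀ᵐ y, ‖h y‖ ≤ M) {n : ℤ} {m : Fin d → ℤ}
    {x c : Euc d} (hx : x ∈ dyadicCube d n m) (hc : ∀ j, c j = ((m j : ℝ) + 1 / 2) * 2 ^ (-n))
    (j : ℕ) : (Mk d (n - j) h x - Mk d (n - j) h c) ^ 2 ≤ d ^ 3 * M ^ 2 * (1 / 4) ^ j := by
  have hM : 0 ≤ M := nonneg_of_ae_norm_le hb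
  have hscale : (2 : ℝ) ^ (-n) * 2 ^ (n - j) = (1 / 2) ^ j := by
    rw [← zpow_add₀ two_ne_zero, show -n + (n - j) = -(j : ℤ) by ring, zpow_neg, zpow_natCast,
      one_div, inv_pow]
  have habs : |Mk d (n - j) h x - Mk d (n - j) h c| ≤ d * √d * M * (1 / 2) ^ j :=
    calc _ ≤ 2 * d * M * dist x c * 2 ^ (n - j) := abs_Mk_sub_Mk_le hd hm hb _ x c
      _ ≤ 2 * d * M * (√d * 2 ^ (-n) / 2) * 2 ^ (n - j) := by
        gcongr; exact dist_center_le hx hc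
      _ = d * √d * M * (1 / 2) ^ j := by rw [← hscale]; ring
  calc _ = |Mk d (n - j) h x - Mk d (n - j) h c| ^ 2 := (sq_abs _).symm
    _ ≤ (d * √d * M * (1 / 2) ^ j) ^ 2 := by gcongr
    _ = d ^ 3 * M ^ 2 * (1 / 4) ^ j := by
      rw [mul_pow, mul_pow, mul_pow, Real.sq_sqrt d.cast_nonneg, ← pow_mul, mul_comm j, pow_mul]
      ring

end Operators

/-- The square function of the differences `F_k(x) = T_k f₂(x) - T_k f₂(c_Q)` is uniformly
bounded on `Q` by `C_d ‖f‖_∞²`, where `f₂ = f 𝟙_{(3Q)ᶜ}` and `T_k = M_k - 𝖤_k`. -/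
theorem square_function_BMO_bound (d : ℕ) (hd : 0 < d) :
    ∃ C : ℝ, 0 < C ∧ ∀ (n : ℤ) (m : Fin d → ℤ) (f : Euc d → ℝ), MemLp f ∞ volume →
      ∀ (c : Euc d), (∀ j, c j = ((m j : ℝ) + 1 / 2) * 2 ^ (-n)) →
      ∀ x ∈ dyadicCube d n m,
        ∑' k : ℤ,
            ((Mk d k (((cubeDil d 3 n m)ᶜ).indicator f) x -
                Ek d k (((cubeDil d 3 n m)ᶜ).indicator f) x) -
              (Mk d k (((cubeDil d 3 n m)ᶜ).indicator f) c -
                Ek d k (((cubeDil d 3 n m)ᶜ).indicator f) c)) ^ 2 ≤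
          C * (eLpNorm f ∞ volume).toReal ^ 2 := by
  refine ⟨4 / 3 * d ^ 3, by positivity, fun n m f hf c hc x hx => ?_⟩
  have hcQ := center_mem_dyadicCube hc
  have hm := hf.1.indicator (measurableSet_cubeDil d 3 n m).compl
  have hb : ∀ᵐ y, ‖((cubeDil d 3 n m)ᶜ.indicator f) y‖ ≤ (eLpNorm f ∞ volume).toReal :=
    hf.ae_norm_le_toReal_eLpNorm_top.mono fun y hy => (norm_indicator_le_norm_self f y).trans hy
  refine (tsum_int_le_of_le_geometric (n := n) (A := d ^ 3 * (eLpNorm f ∞ volume).toReal ^ 2)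
    (fun k => sq_nonneg _) (fun k hk => ?_) (by norm_num : (0 : ℝ) ≤ 1 / 4) (by norm_num)
    fun j => ?_).trans_eq (by ring)
  · rw [Mk_indicator_compl_eq_zero (ball_subset_cubeDil hk hx),
      Mk_indicator_compl_eq_zero (ball_subset_cubeDil hk hcQ),
      Ek_indicator_compl_eq_zero (dyadicCube_dyadicIdx_subset_cubeDil hk.le hx),
      Ek_indicator_compl_eq_zero (dyadicCube_dyadicIdx_subset_cubeDil hk.le hcQ)]
    ring
  · rw [Ek_eq_of_dyadicIdx_eq (dyadicIdx_eq_of_le (by omega)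
      ((mem_dyadicCube_iff.1 hx).trans (mem_dyadicCube_iff.1 hcQ).symm)), sub_sub_sub_cancel_right]
    exact sq_Mk_sub_Mk_center_le hd hm hb hx hc j
end
end
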